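/- arXiv:2005.05289 — 3 statements merged into one kernel-verified Lean document; each statement's English description precedes it below -/
import Mathlib

section
/- Let q be prime, A a subspace of (Z_q)^λ, and ρ a density operator (positive semidefinite, trace one) on C^{(Z_q)^λ}. The probability that sequentially measuring {Π_A, I−Π_A} and then {FT⁻¹Π_{A⊥}FT, I−FT⁻¹Π_{A⊥}FT} both yield the first outcome equals ⟨A| ρ |A⟩. Formally, Tr[ (FT⁻¹ Π_{A⊥} FT) Π_A ρ Π_A (FT⁻¹ Π_{A⊥} FT) ] = ⟨A| ρ |A⟩. -/
/-!
Restricted to `A⊥ × A` the Fourier matrix is the constant `q^{-λ/2}`, so `Π_{A⊥} FT Π_A` is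
the rank-one operator `q^{-λ/2} |1_{A⊥}⟩⟨1_A|`. Orthogonality of characters gives
`FT |1_A⟩ = q^{-λ/2} |A| |1_{A⊥}⟩`, and `FT` is unitary, hence `FT⁻¹ Π_{A⊥} FT Π_A = |A⟩⟨A|`;
taking adjoints, also `Π_A FT⁻¹ Π_{A⊥} FT = |A⟩⟨A|`. The trace therefore collapses to
`⟨A|ρ|A⟩ ⟨A|A⟩ = ⟨A|ρ|A⟩`.
-/

/-- The linear map `v ↦ ∑ i, v i * a i` on `(ZMod q)^l` (pairing with a fixed vector `a`). -/
noncomputable def dotLin {q l : ℕ} (a : Fin l → ZMod q) :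
    (Fin l → ZMod q) →ₗ[ZMod q] ZMod q where
  toFun v := ∑ i, v i * a i
  map_add' x y := by simp [add_mul, Finset.sum_add_distrib]
  map_smul' c x := by simp [Finset.mul_sum, mul_assoc]

/-- The dual subspace `A⊥ = {v : ∀ a ∈ A, ⟨v,a⟩ = 0}` with respect to the standard
bilinear form `⟨v,a⟩ = ∑ i, v i * a i` on `(ZMod q)^l`. -/
noncomputable def dualSub (q l : ℕ) (A : Submodule (ZMod q) (Fin l → ZMod q)) :
    Submodule (ZMod q) (Fin l → ZMod q) :=
  ⨅ a ∈ A, LinearMap.ker (dotLin a)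


/-- The normalized uniform superposition `|A⟩ = |A|^{-1/2} ∑_{a ∈ A} |a⟩`, as a vector in
`ℂ^{(Z_q)^λ}` (a function on the standard basis index set `(Z_q)^λ`). -/
noncomputable def unifSup (q l : ℕ) (A : Submodule (ZMod q) (Fin l → ZMod q)) :
    (Fin l → ZMod q) → ℂ :=
  (A : Set (Fin l → ZMod q)).indicator fun _ => ((Real.sqrt (Nat.card A) : ℂ))⁻¹

/-- The quantum Fourier transform on `ℂ^{(Z_q)^λ}`, as a matrix:
`FT x y = q^{-λ/2} ω^{⟨x,y⟩}` with `ω = exp(2πi/q)`, so that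
`FT|y⟩ = q^{-λ/2} ∑_x ω^{⟨x,y⟩}|x⟩`. -/
noncomputable def FTmat (q l : ℕ) : Matrix (Fin l → ZMod q) (Fin l → ZMod q) ℂ :=
  Matrix.of fun x y =>
    ((Real.sqrt ((q : ℝ) ^ l) : ℂ))⁻¹ *
      Complex.exp (2 * Real.pi * Complex.I / q) ^ (∑ i, x i * y i).val

/-- The coordinate projection `Π_A = ∑_{a ∈ A} |a⟩⟨a|` onto basis states indexed by `A`,
as a diagonal matrix. -/
noncomputable def projMat (q l : ℕ) (A : Submodule (ZMod q) (Fin l → ZMod q)) :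
    Matrix (Fin l → ZMod q) (Fin l → ZMod q) ℂ :=
  Matrix.diagonal ((A : Set (Fin l → ZMod q)).indicator 1)


open Matrix

theorem Matrix.trace_vecMulVec_mul_mul_vecMulVec {n R : Type*} [Fintype n] [CommSemiring R]
    (u w : n → R) (M : Matrix n n R) :
    trace (vecMulVec u w * M * vecMulVec u w) = (w ⬝ᵥ M *ᵥ u) * (w ⬝ᵥ u) := by
  rw [vecMulVec_mul, vecMulVec_mul_vecMulVec, trace_vecMulVec, dotProduct_smul, smul_eq_mul,
    dotProduct_comm u w, dotProduct_mulVec]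

theorem Fintype.sum_mul_indicator_one {ι R : Type*} [Fintype ι] [Semiring R] (s : Set ι)
    [Fintype s] (f : ι → R) : ∑ i, f i * s.indicator 1 i = ∑ i : s, f i := by
  classical
  simp only [Set.indicator_apply, Pi.one_apply, mul_ite, mul_one, mul_zero]
  rw [← Finset.sum_filter, Finset.sum_subtype]
  simp

theorem ZMod.sum_stdAddChar_linearMap_eq_zero {q : ℕ} [NeZero q] {M : Type*} [AddCommGroup M]
    [Module (ZMod q) M] [Fintype M] {f : M →ₗ[ZMod q] ZMod q} (hf : f ≠ 0) :
    ∑ m, stdAddChar (f m) = 0 := by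
  have hψ : stdAddChar.compAddMonoidHom f.toAddMonoidHom ≠ 0 := fun h =>
    hf <| LinearMap.ext fun m => injective_stdAddChar (by simpa using DFunLike.congr_fun h m)
  simpa using AddChar.sum_eq_zero_iff_ne_zero.2 hψ

section DualSub

variable {q l : ℕ}

theorem dotLin_apply (a v : Fin l → ZMod q) : dotLin a v = v ⬝ᵥ a := rfl

theorem dotLin_eq_zero_iff {a : Fin l → ZMod q} : dotLin a = 0 ↔ a = 0 := by
  rw [← dotProduct_eq_zero_iff, LinearMap.ext_iff]
  simp [dotLin_apply, dotProduct_comm a]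

theorem mem_dualSub {A : Submodule (ZMod q) (Fin l → ZMod q)} {x : Fin l → ZMod q} :
    x ∈ dualSub q l A ↔ ∀ a ∈ A, x ⬝ᵥ a = 0 := by
  simp [dualSub, Submodule.mem_iInf, dotLin_apply]

theorem dotLin_comp_subtype_eq_zero_iff {A : Submodule (ZMod q) (Fin l → ZMod q)}
    {x : Fin l → ZMod q} : (dotLin x).comp A.subtype = 0 ↔ x ∈ dualSub q l A := by
  simp [mem_dualSub, LinearMap.ext_iff, dotLin_apply, dotProduct_comm x]

end DualSub

section Fourier

variable {q l : ℕ} [NeZero q]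

theorem inv_sqrt_pow_ne_zero : (√((q : ℝ) ^ l) : ℂ)⁻¹ ≠ 0 := by
  have : 0 < (q : ℝ) ^ l := by positivity [NeZero.pos q]
  simp [Real.sqrt_ne_zero'.2 this]

theorem FTmat_apply (x y : Fin l → ZMod q) :
    FTmat q l x y = (√((q : ℝ) ^ l) : ℂ)⁻¹ * ZMod.stdAddChar (x ⬝ᵥ y) := by
  rw [FTmat, of_apply, ZMod.stdAddChar_apply, ZMod.toCircle_apply, ← Complex.exp_nat_mul]
  simp only [dotProduct]
  ring_nf

theorem conjTranspose_FTmat_apply (x y : Fin l → ZMod q) :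
    (FTmat q l)ᴴ x y = (√((q : ℝ) ^ l) : ℂ)⁻¹ * ZMod.stdAddChar (-(y ⬝ᵥ x)) := by
  rw [conjTranspose_apply, FTmat_apply, star_mul', AddChar.map_neg_eq_conj]
  simp [← Complex.ofReal_inv]

theorem conjTranspose_FTmat_mul_FTmat : (FTmat q l)ᴴ * FTmat q l = 1 := by
  ext x z
  have hentry : ((FTmat q l)ᴴ * FTmat q l) x z = (√((q : ℝ) ^ l) : ℂ)⁻¹ *
      (√((q : ℝ) ^ l) : ℂ)⁻¹ * ∑ y, ZMod.stdAddChar (dotLin (z - x) y) := by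
    simp only [mul_apply, conjTranspose_FTmat_apply, FTmat_apply, Finset.mul_sum, dotLin_apply]
    refine Finset.sum_congr rfl fun y _ => ?_
    rw [dotProduct_sub, sub_eq_neg_add, AddChar.map_add_eq_mul]
    ring
  rw [hentry]
  by_cases h : x = z
  · subst h
    rw [← mul_inv, ← Complex.ofReal_mul, Real.mul_self_sqrt (by positivity)]
    simp [dotLin_apply]
  · have hzx : dotLin (z - x) ≠ 0 := by rwa [Ne, dotLin_eq_zero_iff, sub_eq_zero, eq_comm]
    rw [ZMod.sum_stdAddChar_linearMap_eq_zero hzx, mul_zero, one_apply_ne h]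

theorem inv_FTmat : (FTmat q l)⁻¹ = (FTmat q l)ᴴ :=
  inv_eq_left_inv conjTranspose_FTmat_mul_FTmat

end Fourier

section UniformSuperposition

variable {q l : ℕ} (A : Submodule (ZMod q) (Fin l → ZMod q))

theorem conjTranspose_projMat : (projMat q l A)ᴴ = projMat q l A := by
  rw [projMat, diagonal_conjTranspose]
  congr 1
  ext x
  by_cases hx : x ∈ A <;> simp [hx]

theorem unifSup_eq_smul_indicator :
    unifSup q l A = (√(Nat.card A : ℝ) : ℂ)⁻¹ • (A : Set _).indicator 1 := by
  ext x
  by_cases hx : x ∈ A <;> simp [unifSup, hx]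

theorem star_unifSup : star (unifSup q l A) = unifSup q l A := by
  ext x
  by_cases hx : x ∈ A <;> simp [unifSup, hx, ← Complex.ofReal_inv]

theorem vecMulVec_unifSup_star_unifSup :
    vecMulVec (unifSup q l A) (star (unifSup q l A)) =
      (Nat.card A : ℂ)⁻¹ •
        vecMulVec ((A : Set _).indicator 1) ((A : Set _).indicator 1) := by
  rw [star_unifSup, unifSup_eq_smul_indicator, smul_vecMulVec, vecMulVec_smul, smul_smul,
    ← mul_inv, ← Complex.ofReal_mul, Real.mul_self_sqrt (Nat.cast_nonneg _),
    Complex.ofReal_natCast]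

variable [NeZero q]

theorem star_unifSup_dotProduct_unifSup : star (unifSup q l A) ⬝ᵥ unifSup q l A = 1 := by
  classical
  have hcard : (A : Set (Fin l → ZMod q)).indicator 1 ⬝ᵥ (A : Set _).indicator 1 =
      (Nat.card A : ℂ) := by
    rw [dotProduct, Fintype.sum_mul_indicator_one]
    simp [Nat.card_eq_fintype_card]
  rw [star_unifSup, unifSup_eq_smul_indicator, smul_dotProduct, dotProduct_smul, hcard,
    smul_smul, smul_eq_mul, ← mul_inv, ← Complex.ofReal_mul,
    Real.mul_self_sqrt (Nat.cast_nonneg _), Complex.ofReal_natCast,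
    inv_mul_cancel₀ (Nat.cast_ne_zero.2 Nat.card_pos.ne')]

theorem FTmat_mulVec_indicator :
    FTmat q l *ᵥ (A : Set _).indicator 1 =
      ((√((q : ℝ) ^ l) : ℂ)⁻¹ * Nat.card A) • (dualSub q l A : Set _).indicator 1 := by
  classical
  ext x
  have hsum : (FTmat q l *ᵥ (A : Set _).indicator 1) x =
      (√((q : ℝ) ^ l) : ℂ)⁻¹ *
        ∑ a : A, ZMod.stdAddChar ((dotLin x).comp A.subtype a) := by
    rw [mulVec, dotProduct, Fintype.sum_mul_indicator_one, Finset.mul_sum]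
    simp [FTmat_apply, dotLin_apply, dotProduct_comm x]
  rw [hsum, Pi.smul_apply, smul_eq_mul, Set.indicator_apply]
  split_ifs with hx
  · simp [dotLin_comp_subtype_eq_zero_iff.2 hx, Nat.card_eq_fintype_card]
  · rw [ZMod.sum_stdAddChar_linearMap_eq_zero (dotLin_comp_subtype_eq_zero_iff.not.2 hx),
      mul_zero, mul_zero]

-- A direct computation would need `A⊥⊥ = A`; inverting `FTmat_mulVec_indicator` avoids it.
theorem conjTranspose_FTmat_mulVec_indicator_dualSub :
    (FTmat q l)ᴴ *ᵥ (dualSub q l A : Set _).indicator 1 =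
      ((√((q : ℝ) ^ l) : ℂ)⁻¹ * Nat.card A)⁻¹ • (A : Set _).indicator 1 := by
  have hc : (√((q : ℝ) ^ l) : ℂ)⁻¹ * Nat.card A ≠ 0 :=
    mul_ne_zero inv_sqrt_pow_ne_zero (Nat.cast_ne_zero.2 Nat.card_pos.ne')
  have h := congrArg ((FTmat q l)ᴴ *ᵥ ·) (FTmat_mulVec_indicator A)
  simp only [mulVec_mulVec, conjTranspose_FTmat_mul_FTmat, one_mulVec, mulVec_smul] at h
  rw [h, smul_smul, inv_mul_cancel₀ hc, one_smul]

theorem projMat_mul_FTmat_mul_projMat :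
    projMat q l (dualSub q l A) * FTmat q l * projMat q l A =
      (√((q : ℝ) ^ l) : ℂ)⁻¹ •
        vecMulVec ((dualSub q l A : Set _).indicator 1) ((A : Set _).indicator 1) := by
  ext x y
  rw [projMat, projMat, mul_diagonal, diagonal_mul, Matrix.smul_apply, vecMulVec_apply,
    FTmat_apply]
  by_cases hx : x ∈ dualSub q l A
  · by_cases hy : y ∈ A
    · simp [hx, hy, mem_dualSub.1 hx y hy]
    · simp [hy]
  · simp [hx]

theorem FTmat_inv_mul_projMat_dualSub_mul_FTmat_mul_projMat :
    (FTmat q l)⁻¹ * projMat q l (dualSub q l A) * FTmat q l * projMat q l A =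
      vecMulVec (unifSup q l A) (star (unifSup q l A)) := by
  rw [inv_FTmat, Matrix.mul_assoc, Matrix.mul_assoc, ← Matrix.mul_assoc (projMat _ _ _),
    projMat_mul_FTmat_mul_projMat, Matrix.mul_smul, mul_vecMulVec,
    conjTranspose_FTmat_mulVec_indicator_dualSub, smul_vecMulVec, smul_smul,
    vecMulVec_unifSup_star_unifSup, mul_inv, mul_inv_cancel_left₀ inv_sqrt_pow_ne_zero]

theorem projMat_mul_FTmat_inv_mul_projMat_dualSub_mul_FTmat :
    projMat q l A * ((FTmat q l)⁻¹ * projMat q l (dualSub q l A) * FTmat q l) =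
      vecMulVec (unifSup q l A) (star (unifSup q l A)) := by
  have h := congrArg conjTranspose (FTmat_inv_mul_projMat_dualSub_mul_FTmat_mul_projMat A)
  have hN : ((FTmat q l)ᴴ * projMat q l (dualSub q l A) * FTmat q l)ᴴ =
      (FTmat q l)ᴴ * projMat q l (dualSub q l A) * FTmat q l :=
    isHermitian_conjTranspose_mul_mul (FTmat q l) (conjTranspose_projMat (dualSub q l A))
  rwa [conjTranspose_mul, conjTranspose_projMat, inv_FTmat, hN, conjTranspose_vecMulVec,
    star_star, ← inv_FTmat] at h

end UniformSuperposition

open Matrix in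
open scoped ComplexOrder in
theorem stmt6_general (q l : ℕ) [Fact (Nat.Prime q)]
    (A : Submodule (ZMod q) (Fin l → ZMod q))
    (ρ : Matrix (Fin l → ZMod q) (Fin l → ZMod q) ℂ) :
    ((FTmat q l)⁻¹ * projMat q l (dualSub q l A) * FTmat q l * projMat q l A * ρ *
        projMat q l A * ((FTmat q l)⁻¹ * projMat q l (dualSub q l A) * FTmat q l)).trace =
      star (unifSup q l A) ⬝ᵥ ρ.mulVec (unifSup q l A) := by
  rw [FTmat_inv_mul_projMat_dualSub_mul_FTmat_mul_projMat, Matrix.mul_assoc _ (projMat q l A),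
    projMat_mul_FTmat_inv_mul_projMat_dualSub_mul_FTmat, trace_vecMulVec_mul_mul_vecMulVec,
    star_unifSup_dotProduct_unifSup, mul_one]

open Matrix in
open scoped ComplexOrder in
/-- For a density operator `ρ` on `ℂ^{(Z_q)^λ}` and a subspace `A`, the probability that
sequentially measuring `{Π_A, I − Π_A}` and then `{FT⁻¹Π_{A⊥}FT, I − FT⁻¹Π_{A⊥}FT}` both
yield the first outcome equals `⟨A|ρ|A⟩`:
`Tr[(FT⁻¹Π_{A⊥}FT) Π_A ρ Π_A (FT⁻¹Π_{A⊥}FT)] = ⟨A|ρ|A⟩`. -/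
theorem stmt6 (q l : ℕ) [Fact (Nat.Prime q)]
    (A : Submodule (ZMod q) (Fin l → ZMod q))
    (ρ : Matrix (Fin l → ZMod q) (Fin l → ZMod q) ℂ)
    (hρ : ρ.PosSemidef) (hρtr : ρ.trace = 1) :
    ((FTmat q l)⁻¹ * projMat q l (dualSub q l A) * FTmat q l * projMat q l A * ρ *
        projMat q l A * ((FTmat q l)⁻¹ * projMat q l (dualSub q l A) * FTmat q l)).trace =
      star (unifSup q l A) ⬝ᵥ ρ.mulVec (unifSup q l A) :=
  stmt6_general q l A ρ
end

section
/- Let φ, ψ be unit vectors in a complex Hilbert space with |⟨φ,ψ⟩| ≥ 1 − δ (0 ≤ δ ≤ 1), and let O be a unitary operator. Then |⟨φ, Oψ⟩| ≥ (1−δ)·|⟨ψ, Oψ⟩| − √(2δ − δ²). -/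
/-!
Split `φ = ⟪ψ, φ⟫ ψ + w` with `w ⟂ ψ`. Then `⟪φ, Oψ⟫ = conj ⟪ψ, φ⟫ ⟪ψ, Oψ⟫ + ⟪w, Oψ⟫`, and since
`‖Oψ‖ = 1` the error term is at most `‖w‖ = √(1 - |⟪ψ, φ⟫|²) ≤ √(1 - (1 - δ)²) = √(2δ - δ²)`.
-/

open scoped InnerProductSpace ComplexConjugate

section UnitVector

variable {𝕜 E : Type*} [RCLike 𝕜] [NormedAddCommGroup E] [InnerProductSpace 𝕜 E]

theorem inner_sub_inner_smul_eq_zero {ψ : E} (hψ : ‖ψ‖ = 1) (φ : E) :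
    ⟪ψ, φ - ⟪ψ, φ⟫_𝕜 • ψ⟫_𝕜 = 0 := by
  rw [inner_sub_right, inner_smul_right, inner_self_eq_one_of_norm_eq_one hψ, mul_one, sub_self]

theorem norm_sub_inner_smul_sq {ψ : E} (hψ : ‖ψ‖ = 1) (φ : E) :
    ‖φ - ⟪ψ, φ⟫_𝕜 • ψ‖ ^ 2 = ‖φ‖ ^ 2 - ‖⟪ψ, φ⟫_𝕜‖ ^ 2 := by
  have hperp : ⟪⟪ψ, φ⟫_𝕜 • ψ, φ - ⟪ψ, φ⟫_𝕜 • ψ⟫_𝕜 = 0 := by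
    rw [inner_smul_left, inner_sub_inner_smul_eq_zero hψ, mul_zero]
  have hpyth := norm_add_sq_eq_norm_sq_add_norm_sq_of_inner_eq_zero _ _ hperp
  rw [add_sub_cancel, norm_smul, hψ, mul_one] at hpyth
  nlinarith [hpyth]

theorem norm_inner_mul_sub_le_norm_inner {ψ : E} (hψ : ‖ψ‖ = 1) (φ x : E) :
    ‖⟪ψ, φ⟫_𝕜‖ * ‖⟪ψ, x⟫_𝕜‖ - √(‖φ‖ ^ 2 - ‖⟪ψ, φ⟫_𝕜‖ ^ 2) * ‖x‖ ≤ ‖⟪φ, x⟫_𝕜‖ := by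
  set w := φ - ⟪ψ, φ⟫_𝕜 • ψ
  have hsplit : ⟪φ, x⟫_𝕜 = conj ⟪ψ, φ⟫_𝕜 * ⟪ψ, x⟫_𝕜 + ⟪w, x⟫_𝕜 := by
    rw [← inner_smul_left, ← inner_add_left, add_sub_cancel]
  have hw : ‖⟪w, x⟫_𝕜‖ ≤ √(‖φ‖ ^ 2 - ‖⟪ψ, φ⟫_𝕜‖ ^ 2) * ‖x‖ := by
    rw [← norm_sub_inner_smul_sq hψ, Real.sqrt_sq (norm_nonneg _)]
    exact norm_inner_le_norm w x
  calc ‖⟪ψ, φ⟫_𝕜‖ * ‖⟪ψ, x⟫_𝕜‖ - √(‖φ‖ ^ 2 - ‖⟪ψ, φ⟫_𝕜‖ ^ 2) * ‖x‖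
      ≤ ‖conj ⟪ψ, φ⟫_𝕜 * ⟪ψ, x⟫_𝕜‖ - ‖⟪w, x⟫_𝕜‖ := by
        rw [norm_mul, RCLike.norm_conj]; linarith
    _ ≤ ‖⟪φ, x⟫_𝕜‖ := by rw [hsplit]; exact norm_sub_le_norm_add _ _

end UnitVector

theorem one_sub_sq_le_two_mul_sub_sq {a δ : ℝ} (ha : 1 - δ ≤ a) (hδ : δ ≤ 1) :
    1 - a ^ 2 ≤ 2 * δ - δ ^ 2 := by
  nlinarith

theorem stmt8_general {E : Type*} [NormedAddCommGroup E] [InnerProductSpace ℂ E]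
    (φ ψ : E) (hφ : ‖φ‖ = 1) (hψ : ‖ψ‖ = 1) (δ : ℝ) (hδ1 : δ ≤ 1)
    (h : ‖(inner ℂ φ ψ : ℂ)‖ ≥ 1 - δ) (O : E ≃ₗᵢ[ℂ] E) :
    ‖(inner ℂ φ (O ψ) : ℂ)‖ ≥ (1 - δ) * ‖(inner ℂ ψ (O ψ) : ℂ)‖ - Real.sqrt (2 * δ - δ ^ 2) := by
  have hc : 1 - δ ≤ ‖⟪ψ, φ⟫_ℂ‖ := by rwa [norm_inner_symm]
  have hmain := norm_inner_mul_sub_le_norm_inner (𝕜 := ℂ) hψ φ (O ψ)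
  rw [hφ, one_pow, O.norm_map, hψ, mul_one] at hmain
  have hsqrt : √(1 - ‖⟪ψ, φ⟫_ℂ‖ ^ 2) ≤ √(2 * δ - δ ^ 2) :=
    Real.sqrt_le_sqrt (one_sub_sq_le_two_mul_sub_sq hc hδ1)
  have hmul : (1 - δ) * ‖⟪ψ, O ψ⟫_ℂ‖ ≤ ‖⟪ψ, φ⟫_ℂ‖ * ‖⟪ψ, O ψ⟫_ℂ‖ :=
    mul_le_mul_of_nonneg_right hc (norm_nonneg _)
  linarith

/-- If unit vectors `φ, ψ` satisfy `|⟨φ,ψ⟩| ≥ 1 − δ` (`0 ≤ δ ≤ 1`) and `O` is a unitary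
operator, then `|⟨φ, Oψ⟩| ≥ (1−δ)·|⟨ψ, Oψ⟩| − √(2δ − δ²)`. -/
theorem stmt8 {E : Type*} [NormedAddCommGroup E] [InnerProductSpace ℂ E]
    (φ ψ : E) (hφ : ‖φ‖ = 1) (hψ : ‖ψ‖ = 1) (δ : ℝ) (hδ0 : 0 ≤ δ) (hδ1 : δ ≤ 1)
    (h : ‖(inner ℂ φ ψ : ℂ)‖ ≥ 1 - δ) (O : E ≃ₗᵢ[ℂ] E) :
    ‖(inner ℂ φ (O ψ) : ℂ)‖ ≥ (1 - δ) * ‖(inner ℂ ψ (O ψ) : ℂ)‖ - Real.sqrt (2 * δ - δ ^ 2) :=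
  stmt8_general φ ψ hφ hψ δ hδ1 h O
end

section
/- (Gentle measurement / Almost-As-Good-As-New Lemma.) Let ρ be a density operator on C^d, let U be a unitary on C^d ⊗ C^{d'}, and let Π₀ be an orthogonal projection on C^d ⊗ C^{d'} with Π₁ = I − Π₀. Suppose Tr[Π₀ U (ρ ⊗ |0⟩⟨0|) U†] = 1 − ε. Define ρ̃ = Tr_{d'}[ U† ( Π₀ U (ρ⊗|0⟩⟨0|) U† Π₀ + Π₁ U (ρ⊗|0⟩⟨0|) U† Π₁ ) U ]. Then (1/2)·‖ρ − ρ̃‖₁ ≤ √ε. -/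
open scoped ComplexOrder

/-- The trace norm (sum of singular values) of a square complex matrix:
the sum of the square roots of the eigenvalues of `Mᴴ * M`. -/
noncomputable def traceNorm {n : Type*} [Fintype n] [DecidableEq n]
    (M : Matrix n n ℂ) : ℝ :=
  ∑ i, Real.sqrt ((Matrix.posSemidef_conjTranspose_mul_self M).1.eigenvalues i)

open Matrix Kronecker

/-- Partial trace over the second (ancilla) tensor factor. -/
noncomputable def ptraceRight {ι κ : Type*} [Fintype κ]
    (M : Matrix (ι × κ) (ι × κ) ℂ) : Matrix ι ι ℂ :=
  Matrix.of fun i j => ∑ k, M (i, k) (j, k)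

/-!
Write `σ = U (ρ ⊗ |0⟩⟨0|) U†` and `Π₁ = 1 - Π₀`. The trace norm of a Hermitian matrix `Δ` is
attained as `Tr (S Δ)` by the contraction `S = sign Δ`, and the partial trace turns `S` into the
contraction `C = U (S ⊗ 1) U†` on the joint system. Since `σ` minus its measured version is
`Π₀ σ Π₁ + Π₁ σ Π₀`, it remains to bound `|Tr (C Π₀ σ Π₁)|`, which by the Cauchy–Schwarz
inequality for the inner product `⟪x, y⟫ = Tr (y σ x†)` is at most
`√(Tr Π₁ σ) √(Tr Π₀ σ) = √(ε (1 - ε)) ≤ √ε`, and likewise for the other cross term.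
-/

open scoped MatrixOrder

lemma star_conj_mul_self_le_one {R : Type*} [Semiring R] [PartialOrder R] [StarRing R]
    [StarOrderedRing R] {U C : R} (hU : U ∈ unitary R) (hC : star C * C ≤ 1) :
    star (U * C * star U) * (U * C * star U) ≤ 1 :=
  calc star (U * C * star U) * (U * C * star U) = U * (star C * C) * star U := by
        simp only [star_mul, star_star, mul_assoc]
        rw [← mul_assoc (star U), Unitary.star_mul_self_of_mem hU, one_mul]
    _ ≤ U * 1 * star U := star_right_conjugate_le_conjugate hC U
    _ = 1 := by rw [mul_one, Unitary.mul_star_self_of_mem hU]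

section TraceInequalities

variable {n : Type*} [Fintype n]

lemma Matrix.PosSemidef.norm_trace_mul_mul_conjTranspose_le {σ : Matrix n n ℂ}
    (hσ : σ.PosSemidef) (x y : Matrix n n ℂ) :
    ‖(y * σ * xᴴ).trace‖ ≤ √(x * σ * xᴴ).trace.re * √(y * σ * yᴴ).trace.re := by
  let := σ.toMatrixSeminormedAddCommGroup hσ
  let := σ.toMatrixInnerProductSpace hσ
  have h := norm_inner_le_norm (𝕜 := ℂ) x y
  rwa [norm_eq_sqrt_re_inner (𝕜 := ℂ) x, norm_eq_sqrt_re_inner (𝕜 := ℂ) y] at h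

variable [DecidableEq n]

lemma Matrix.PosSemidef.trace_mul_nonneg {A B : Matrix n n ℂ} (hA : A.PosSemidef)
    (hB : B.PosSemidef) : 0 ≤ (A * B).trace := by
  obtain ⟨E, rfl⟩ := CStarAlgebra.nonneg_iff_eq_star_mul_self.mp hA.nonneg
  rw [mul_assoc, trace_mul_comm, mul_assoc, star_eq_conjTranspose, ← mul_assoc]
  exact (hB.mul_mul_conjTranspose_same E).trace_nonneg

lemma Matrix.PosSemidef.trace_mul_mul_star_le {B C : Matrix n n ℂ} (hB : B.PosSemidef)
    (hC : star C * C ≤ 1) : (C * B * star C).trace ≤ B.trace := by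
  have h := (Matrix.le_iff.mp hC).trace_mul_nonneg hB
  rwa [sub_mul, one_mul, trace_sub, sub_nonneg, mul_assoc, trace_mul_comm] at h

lemma Matrix.PosSemidef.norm_trace_mul_mul_mul_le {σ C P Q : Matrix n n ℂ} (hσ : σ.PosSemidef)
    (hC : star C * C ≤ 1) (hP : P.IsHermitian) (hQ : Q.IsHermitian) :
    ‖(C * (P * σ * Q)).trace‖ ≤ √(Q * σ * Q).trace.re * √(P * σ * P).trace.re := by
  have hcs := hσ.norm_trace_mul_mul_conjTranspose_le Q (C * P)
  have hcontr : (C * P * σ * (C * P)ᴴ).trace.re ≤ (P * σ * P).trace.re := by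
    have h := (hσ.mul_mul_conjTranspose_same P).trace_mul_mul_star_le hC
    rw [hP.eq] at h
    simpa only [conjTranspose_mul, hP.eq, star_eq_conjTranspose, mul_assoc] using
      (Complex.le_def.mp h).1
  rw [hQ.eq] at hcs
  rw [← mul_assoc, ← mul_assoc]
  exact hcs.trans (by gcongr)

lemma Matrix.PosSemidef.re_trace_mul_sub_pinching_le {σ C P : Matrix n n ℂ} {ε : ℝ}
    (hσ : σ.PosSemidef) (hσtr : σ.trace = 1) (hP : IsStarProjection P) (hC : star C * C ≤ 1)
    (hε : 0 ≤ ε) (htr : (P * σ).trace = (1 - ε : ℝ)) :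
    (C * (σ - (P * σ * P + (1 - P) * σ * (1 - P)))).trace.re ≤ 2 * √ε := by
  have trace_conj {R : Matrix n n ℂ} (hR : IsStarProjection R) :
      (R * σ * R).trace = (R * σ).trace := by
    rw [trace_mul_comm, ← mul_assoc, hR.isIdempotentElem.eq]
  have hP₀ : (P * σ * P).trace.re = 1 - ε := by
    rw [trace_conj hP, htr, Complex.ofReal_re]
  have hP₁ : ((1 - P) * σ * (1 - P)).trace.re = ε := by
    rw [trace_conj hP.one_sub, sub_mul, one_mul, trace_sub, hσtr, htr]
    simp
  have hoff : σ - (P * σ * P + (1 - P) * σ * (1 - P)) = P * σ * (1 - P) + (1 - P) * σ * P := by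
    noncomm_ring
  have h₀₁ := hσ.norm_trace_mul_mul_mul_le hC hP.isSelfAdjoint hP.one_sub.isSelfAdjoint
  have h₁₀ := hσ.norm_trace_mul_mul_mul_le hC hP.one_sub.isSelfAdjoint hP.isSelfAdjoint
  rw [hP₀, hP₁] at h₀₁ h₁₀
  have hsqrt : √ε * √(1 - ε) ≤ √ε :=
    mul_le_of_le_one_right (Real.sqrt_nonneg _) (Real.sqrt_le_one.mpr (by linarith))
  rw [hoff, mul_add, trace_add, Complex.add_re]
  linarith [Complex.re_le_norm (C * (P * σ * (1 - P))).trace,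
    Complex.re_le_norm (C * ((1 - P) * σ * P)).trace]

end TraceInequalities

section TraceNormDuality

variable {n : Type*} [Fintype n] [DecidableEq n]

lemma Matrix.IsHermitian.trace_cfc {A : Matrix n n ℂ} (hA : A.IsHermitian) (f : ℝ → ℝ) :
    (cfc f A).trace = ∑ i, (f (hA.eigenvalues i) : ℂ) := by
  rw [hA.cfc_eq, IsHermitian.cfc, Unitary.conjStarAlgAut_apply, trace_mul_cycle,
    Unitary.coe_star_mul_self, one_mul, trace_diagonal]
  rfl

lemma traceNorm_eq_trace_abs (M : Matrix n n ℂ) : (traceNorm M : ℂ) = (CFC.abs M).trace := by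
  rw [CFC.abs, CFC.sqrt_eq_real_sqrt _ (star_mul_self_nonneg M), cfcₙ_eq_cfc,
    star_eq_conjTranspose, (posSemidef_conjTranspose_mul_self M).1.trace_cfc, traceNorm]
  push_cast
  rfl

lemma Matrix.IsHermitian.exists_trace_mul_eq_traceNorm {Δ : Matrix n n ℂ} (hΔ : Δ.IsHermitian) :
    ∃ S : Matrix n n ℂ, star S * S ≤ 1 ∧ (S * Δ).trace = traceNorm Δ := by
  have hcont (f : ℝ → ℝ) : ContinuousOn f (spectrum ℝ Δ) := finite_real_spectrum.continuousOn f
  refine ⟨cfc (fun x : ℝ => (SignType.sign x : ℝ)) Δ, ?_, ?_⟩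
  · rw [IsSelfAdjoint.star_eq (cfc_predicate _ Δ), ← cfc_mul _ _ Δ (hcont _) (hcont _)]
    refine cfc_le_one _ _ fun x _ => ?_
    rcases SignType.sign x with _ | _ | _ <;> simp
  · rw [traceNorm_eq_trace_abs, CFC.abs_eq_cfc_norm Δ hΔ.isSelfAdjoint]
    have h := cfc_mul (fun x : ℝ => (SignType.sign x : ℝ)) (fun x => x) Δ (hcont _) (hcont _)
    rw [cfc_id' ℝ Δ] at h
    simp only [← h, sign_mul_self, Real.norm_eq_abs]

end TraceNormDuality

section PartialTrace

variable {ι κ : Type*} [Fintype ι] [Fintype κ] [DecidableEq κ]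

lemma Matrix.star_kronecker_one_mul_self_le_one [DecidableEq ι] {S : Matrix ι ι ℂ}
    (hS : star S * S ≤ 1) : star (S ⊗ₖ (1 : Matrix κ κ ℂ)) * (S ⊗ₖ 1) ≤ 1 := by
  have h := (Matrix.le_iff.mp hS).kronecker (PosSemidef.one (n := κ))
  have hsub : (1 - star S * S) ⊗ₖ (1 : Matrix κ κ ℂ) = 1 - (star S * S) ⊗ₖ 1 := by
    rw [eq_sub_iff_add_eq, ← add_kronecker, sub_add_cancel, one_kronecker_one]
  rw [hsub, ← Matrix.le_iff] at h
  simpa only [star_eq_conjTranspose, conjTranspose_kronecker, conjTranspose_one,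
    ← mul_kronecker_mul, mul_one] using h

omit [Fintype ι] [DecidableEq κ] in
lemma ptraceRight_kronecker (A : Matrix ι ι ℂ) (B : Matrix κ κ ℂ) :
    ptraceRight (A ⊗ₖ B) = B.trace • A := by
  ext i j
  simp [ptraceRight, trace, Finset.mul_sum, mul_comm]

omit [Fintype ι] [DecidableEq κ] in
lemma Matrix.IsHermitian.ptraceRight {M : Matrix (ι × κ) (ι × κ) ℂ} (hM : M.IsHermitian) :
    (_root_.ptraceRight M).IsHermitian := by
  ext i j
  simp only [_root_.ptraceRight, conjTranspose_apply, of_apply, star_sum]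
  exact Finset.sum_congr rfl fun k _ => by rw [← conjTranspose_apply, hM.eq]

lemma trace_mul_ptraceRight (S : Matrix ι ι ℂ) (M : Matrix (ι × κ) (ι × κ) ℂ) :
    (S * ptraceRight M).trace = ((S ⊗ₖ (1 : Matrix κ κ ℂ)) * M).trace := by
  simp only [trace, diag, mul_apply, ptraceRight, of_apply, kroneckerMap_apply, one_apply,
    Fintype.sum_prod_type, Finset.mul_sum, mul_ite, mul_one, mul_zero, ite_mul, zero_mul,
    Finset.sum_ite_eq, Finset.mem_univ, if_true]
  exact Finset.sum_congr rfl fun i _ => Finset.sum_comm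

end PartialTrace

theorem traceNorm_ptraceRight_sub_pinching_le {ι κ : Type*} [Fintype ι] [DecidableEq ι]
    [Fintype κ] [DecidableEq κ] {X U P : Matrix (ι × κ) (ι × κ) ℂ} {ε : ℝ}
    (hX : X.PosSemidef) (hXtr : X.trace = 1) (hU : U ∈ unitaryGroup (ι × κ) ℂ)
    (hP : IsStarProjection P) (hε : 0 ≤ ε) (htr : (P * (U * X * Uᴴ)).trace = (1 - ε : ℝ)) :
    traceNorm (ptraceRight X - ptraceRight (Uᴴ * (P * (U * X * Uᴴ) * P +
      (1 - P) * (U * X * Uᴴ) * (1 - P)) * U)) ≤ 2 * √ε := by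
  set σ := U * X * Uᴴ
  set Y := P * σ * P + (1 - P) * σ * (1 - P)
  have hUU : Uᴴ * U = 1 := Unitary.star_mul_self_of_mem hU
  have hσ : σ.PosSemidef := hX.mul_mul_conjTranspose_same U
  have hσtr : σ.trace = 1 := by rw [trace_mul_cycle, hUU, one_mul, hXtr]
  have hX_eq : X = Uᴴ * σ * U := by
    simp only [σ, ← mul_assoc, hUU, one_mul]
    rw [mul_assoc, hUU, mul_one]
  have hY : Y.IsHermitian := by
    have h := (hσ.isHermitian.isSelfAdjoint.conjugate P).add
      (hσ.isHermitian.isSelfAdjoint.conjugate (1 - P))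
    rwa [hP.isSelfAdjoint.star_eq, hP.one_sub.isSelfAdjoint.star_eq] at h
  have hΔ := hX.isHermitian.ptraceRight.sub (isHermitian_conjTranspose_mul_mul U hY).ptraceRight
  obtain ⟨S, hS, hSΔ⟩ := hΔ.exists_trace_mul_eq_traceNorm
  have hC := star_conj_mul_self_le_one hU (star_kronecker_one_mul_self_le_one (κ := κ) hS)
  have hcross : (S * (ptraceRight X - ptraceRight (Uᴴ * Y * U))).trace
      = (U * (S ⊗ₖ 1) * star U * (σ - Y)).trace := by
    rw [mul_sub, trace_sub, trace_mul_ptraceRight, trace_mul_ptraceRight, ← trace_sub, ← mul_sub,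
      hX_eq, ← sub_mul, ← mul_sub, ← mul_assoc, trace_mul_comm, star_eq_conjTranspose]
    simp only [mul_assoc]
  have h := hσ.re_trace_mul_sub_pinching_le hσtr hP hC hε htr
  rwa [← hcross, hSΔ, Complex.ofReal_re] at h

/-- Gentle measurement / Almost-As-Good-As-New lemma: let `ρ` be a density operator on
`ℂ^d`, `U` a unitary on `ℂ^d ⊗ ℂ^{d'}`, and `{Π₀, Π₁ = I − Π₀}` a projective measurement
with `Tr[Π₀ U(ρ ⊗ |0⟩⟨0|)U†] = 1 − ε`. Then the state
`ρ̃ = Tr_{d'}[U†(Π₀ U(ρ⊗|0⟩⟨0|)U† Π₀ + Π₁ U(ρ⊗|0⟩⟨0|)U† Π₁)U]` obtained by measuring and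
uncomputing satisfies `(1/2)‖ρ − ρ̃‖₁ ≤ √ε`. -/
theorem stmt12 (d d' : ℕ) [NeZero d']
    (ρ : Matrix (Fin d) (Fin d) ℂ) (hρ : ρ.PosSemidef) (hρtr : ρ.trace = 1)
    (U : Matrix (Fin d × Fin d') (Fin d × Fin d') ℂ)
    (hU : U ∈ Matrix.unitaryGroup (Fin d × Fin d') ℂ)
    (P0 : Matrix (Fin d × Fin d') (Fin d × Fin d') ℂ)
    (hP0 : P0.IsHermitian) (hP0sq : P0 * P0 = P0)
    (ε : ℝ) (hε : 0 ≤ ε)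
    (htr : (P0 * (U * (ρ ⊗ₖ Matrix.single (0 : Fin d') (0 : Fin d') (1 : ℂ)) * Uᴴ)).trace
        = ((1 - ε : ℝ) : ℂ)) :
    (1 / 2 : ℝ) *
        traceNorm (ρ -
          ptraceRight (Uᴴ *
            (P0 * (U * (ρ ⊗ₖ Matrix.single (0 : Fin d') (0 : Fin d') (1 : ℂ)) * Uᴴ) * P0 +
             (1 - P0) * (U * (ρ ⊗ₖ Matrix.single (0 : Fin d') (0 : Fin d') (1 : ℂ)) * Uᴴ) *
               (1 - P0)) * U)) ≤
      Real.sqrt ε := by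
  have hket : IsStarProjection (single (0 : Fin d') (0 : Fin d') (1 : ℂ)) :=
    ⟨by simp [IsIdempotentElem], by simp [IsSelfAdjoint, star_eq_conjTranspose]⟩
  have hX := hρ.kronecker (nonneg_iff_posSemidef.mp hket.nonneg)
  have hXtr : (ρ ⊗ₖ single (0 : Fin d') 0 (1 : ℂ)).trace = 1 := by
    rw [trace_kronecker, hρtr, trace_single_eq_same, mul_one]
  have h := traceNorm_ptraceRight_sub_pinching_le hX hXtr hU ⟨hP0sq, hP0⟩ hε htr
  rw [ptraceRight_kronecker, trace_single_eq_same, one_smul] at h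
  linarith
end
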